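/- Let G(x) = (1/2) e^{-|x|} on ℝ, let θ ∈ (0,1), N ∈ ℕ, and φ_N be the truncated weight (φ_N(x) = e^{θ|x|} for |x| < N, e^{θN} otherwise). Then for all bounded measurable f, g : ℝ → ℝ with f·φ_N bounded, the pointwise bound |φ_N(x) · (G * (f²g))(x)| ≤ (4/(1-θ)) · ‖f‖_∞ · ‖g‖_∞ · ‖f φ_N‖_∞ holds for every x ∈ ℝ. -/

import Mathlib

open MeasureTheory Real Set

lemma aux_integrable_exp_abs (a : ℝ) (ha : 0 < a) :
    Integrable (fun y : ℝ => Real.exp (-(a * |y|))) := by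
  have h1 : IntegrableOn (fun y : ℝ => Real.exp (-(a * |y|))) (Ioi 0) := by
    refine (exp_neg_integrableOn_Ioi 0 ha).congr_fun (fun y hy => ?_) measurableSet_Ioi
    rw [abs_of_pos hy]; ring_nf
  have h2 : IntegrableOn (fun y : ℝ => Real.exp (-(a * |y|))) (Iic 0) := by
    rw [← Measure.map_neg_eq_self (volume : Measure ℝ)]
    have m : MeasurableEmbedding fun x : ℝ => -x :=
      (Homeomorph.neg ℝ).measurableEmbedding
    rw [m.integrableOn_map_iff]
    simp_rw [Function.comp_def, abs_neg, neg_preimage, neg_Iic, neg_zero]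
    exact (integrableOn_Ici_iff_integrableOn_Ioi).mpr h1
  have h3 := h2.union h1
  rw [Iic_union_Ioi] at h3
  exact integrableOn_univ.mp h3

lemma aux_integral_exp_abs (a : ℝ) (ha : 0 < a) :
    ∫ y : ℝ, Real.exp (-(a * |y|)) = 2 / a := by
  have : ∫ y : ℝ, Real.exp (-(a * |y|))
      = 2 * ∫ y in Ioi (0:ℝ), Real.exp (-(a * y)) :=
    integral_comp_abs (f := fun t => Real.exp (-(a * t)))
  rw [this]
  have h := integral_comp_mul_left_Ioi (fun x => Real.exp (-x)) 0 ha
  simp only [mul_zero, smul_eq_mul] at h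
  rw [show (fun x : ℝ => Real.exp (-(a * x))) = fun x : ℝ => Real.exp (-(a * x)) from rfl]
  have h0 : ∫ x in Ioi (0:ℝ), Real.exp (-x) = 1 := integral_exp_neg_Ioi_zero
  rw [h, h0]
  field_simp

theorem phiN_weighted_convolution_estimate (θ : ℝ) (hθ : θ ∈ Set.Ioo (0:ℝ) 1) (N : ℕ)
    (φ : ℝ → ℝ)
    (hφ : ∀ x, φ x = if |x| < (N:ℝ) then Real.exp (θ * |x|) else Real.exp (θ * N))
    (f g : ℝ → ℝ) (hfm : Measurable f) (hgm : Measurable g)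
    (Cf Cg Cfφ : ℝ)
    (hf : ∀ x, |f x| ≤ Cf) (hg : ∀ x, |g x| ≤ Cg) (hfφ : ∀ x, |f x * φ x| ≤ Cfφ) :
    ∀ x : ℝ,
      |φ x * ∫ y : ℝ, (1/2) * Real.exp (-|x - y|) * (f y ^ 2 * g y)| ≤
        (4 / (1 - θ)) * Cf * Cg * Cfφ := by
  obtain ⟨hθ0, hθ1⟩ := hθ
  have ha : (0:ℝ) < 1 - θ := by linarith
  -- φ in closed form
  have hφ' : ∀ x, φ x = Real.exp (θ * min |x| (N:ℝ)) := by
    intro x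
    rw [hφ]
    split_ifs with h
    · rw [min_eq_left h.le]
    · rw [min_eq_right (not_lt.mp h)]
  have hφpos : ∀ x, 0 < φ x := fun x => by rw [hφ']; exact exp_pos _
  -- Lipschitz-type bound
  have hφle : ∀ x y : ℝ, φ x ≤ Real.exp (θ * |x - y|) * φ y := by
    intro x y
    rw [hφ' x, hφ' y, ← Real.exp_add]
    apply Real.exp_le_exp.mpr
    have hmin : min |x| (N:ℝ) ≤ min |y| (N:ℝ) + |x - y| := by
      rcases min_cases |y| (N:ℝ) with ⟨h1, h2⟩ | ⟨h1, h2⟩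
      · rw [h1]
        have h3 : min |x| (N:ℝ) ≤ |x| := min_le_left _ _
        have h4 : |x| - |y| ≤ |x - y| := abs_sub_abs_le_abs_sub x y
        linarith
      · rw [h1]
        have h3 : min |x| (N:ℝ) ≤ (N:ℝ) := min_le_right _ _
        have h4 : (0:ℝ) ≤ |x - y| := abs_nonneg _
        linarith
    nlinarith [abs_nonneg (x - y), min_le_right |x| (N:ℝ)]
  -- nonnegativity of constants
  have hCf : 0 ≤ Cf := le_trans (abs_nonneg _) (hf 0)
  have hCg : 0 ≤ Cg := le_trans (abs_nonneg _) (hg 0)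
  have hCfφ : 0 ≤ Cfφ := le_trans (abs_nonneg _) (hfφ 0)
  intro x
  set h : ℝ → ℝ := fun y => (1/2) * Real.exp (-|x - y|) * (f y ^ 2 * g y) with hh
  -- the integrable bound
  have hbi : Integrable (fun y : ℝ => Real.exp (-((1 - θ) * |x - y|))) := by
    have := (aux_integrable_exp_abs (1 - θ) ha).comp_sub_left x
    simpa using this
  have hbi' : Integrable
      (fun y : ℝ => (1/2) * Real.exp (-((1 - θ) * |x - y|)) * (Cf * Cfφ * Cg)) := by
    simpa [mul_comm, mul_assoc, mul_left_comm] using (hbi.const_mul (1/2)).mul_const (Cf * Cfφ * Cg)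
  -- pointwise bound
  have hpt : ∀ y : ℝ, φ x * |h y| ≤ (1/2) * Real.exp (-((1 - θ) * |x - y|)) * (Cf * Cfφ * Cg) := by
    intro y
    have e1 : |h y| = (1/2) * Real.exp (-|x - y|) * (|f y| ^ 2 * |g y|) := by
      simp [hh, abs_mul, abs_of_nonneg (Real.exp_nonneg _), abs_pow]
    rw [e1]
    have h2 : φ x * Real.exp (-|x - y|) ≤ Real.exp (-((1 - θ) * |x - y|)) * φ y := by
      calc φ x * Real.exp (-|x - y|)
          ≤ (Real.exp (θ * |x - y|) * φ y) * Real.exp (-|x - y|) := by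
            apply mul_le_mul_of_nonneg_right (hφle x y) (Real.exp_nonneg _)
        _ = (Real.exp (θ * |x - y|) * Real.exp (-|x - y|)) * φ y := by ring
        _ = Real.exp (-((1 - θ) * |x - y|)) * φ y := by
            rw [← Real.exp_add]; ring_nf
    have h3 : φ y * (|f y| ^ 2 * |g y|) ≤ Cf * Cfφ * Cg := by
      have e2 : φ y * (|f y| ^ 2 * |g y|) = |f y| * |f y * φ y| * |g y| := by
        rw [abs_mul, abs_of_pos (hφpos y)]; ring
      rw [e2]
      have := hφpos y
      apply mul_le_mul _ (hg y) (abs_nonneg _) (by positivity)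
      exact mul_le_mul (hf y) (hfφ y) (abs_nonneg _) hCf
    calc φ x * ((1/2) * Real.exp (-|x - y|) * (|f y| ^ 2 * |g y|))
        = (1/2) * (φ x * Real.exp (-|x - y|)) * (|f y| ^ 2 * |g y|) := by ring
      _ ≤ (1/2) * (Real.exp (-((1 - θ) * |x - y|)) * φ y) * (|f y| ^ 2 * |g y|) := by
          apply mul_le_mul_of_nonneg_right (by linarith [h2] : (1/2) * (φ x * Real.exp (-|x - y|)) ≤ (1/2) * (Real.exp (-((1 - θ) * |x - y|)) * φ y)) (by positivity)
      _ = (1/2) * Real.exp (-((1 - θ) * |x - y|)) * (φ y * (|f y| ^ 2 * |g y|)) := by ring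
      _ ≤ (1/2) * Real.exp (-((1 - θ) * |x - y|)) * (Cf * Cfφ * Cg) := by
          apply mul_le_mul_of_nonneg_left h3 (by positivity)
  -- main chain
  have step1 : |φ x * ∫ y : ℝ, h y| ≤ ∫ y : ℝ, φ x * |h y| := by
    have hmul : ∫ y : ℝ, φ x * |h y| = φ x * ∫ y : ℝ, |h y| := integral_const_mul _ _
    rw [abs_mul, abs_of_pos (hφpos x), hmul]
    apply mul_le_mul_of_nonneg_left _ (hφpos x).le
    simpa [Real.norm_eq_abs] using norm_integral_le_integral_norm (μ := volume) h
  have step2 : ∫ y : ℝ, φ x * |h y| ≤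
      ∫ y : ℝ, (1/2) * Real.exp (-((1 - θ) * |x - y|)) * (Cf * Cfφ * Cg) := by
    apply integral_mono_of_nonneg
    · exact Filter.Eventually.of_forall fun y => mul_nonneg (hφpos x).le (abs_nonneg _)
    · exact hbi'
    · exact Filter.Eventually.of_forall hpt
  have step3 : ∫ y : ℝ, (1/2) * Real.exp (-((1 - θ) * |x - y|)) * (Cf * Cfφ * Cg)
      = (1/(1 - θ)) * (Cf * Cfφ * Cg) := by
    rw [show (fun y : ℝ => (1/2) * Real.exp (-((1 - θ) * |x - y|)) * (Cf * Cfφ * Cg))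
        = fun y : ℝ => ((1/2) * (Cf * Cfφ * Cg)) * Real.exp (-((1 - θ) * |x - y|)) from
      funext fun y => by ring]
    rw [integral_const_mul]
    have hs : ∫ y : ℝ, Real.exp (-((1 - θ) * |x - y|)) = 2 / (1 - θ) := by
      rw [← aux_integral_exp_abs (1 - θ) ha]
      exact integral_sub_left_eq_self (fun z => Real.exp (-((1 - θ) * |z|))) volume x
    rw [hs]
    field_simp
  calc |φ x * ∫ y : ℝ, h y| ≤ ∫ y : ℝ, φ x * |h y| := step1
    _ ≤ ∫ y : ℝ, (1/2) * Real.exp (-((1 - θ) * |x - y|)) * (Cf * Cfφ * Cg) := step2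
    _ = (1/(1 - θ)) * (Cf * Cfφ * Cg) := step3
    _ ≤ (4 / (1 - θ)) * Cf * Cg * Cfφ := by
        rw [show (4 / (1 - θ)) * Cf * Cg * Cfφ = (4/(1 - θ)) * (Cf * Cfφ * Cg) from by ring]
        apply mul_le_mul_of_nonneg_right _ (by positivity)
        gcongr
        norm_num
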